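/- Let u ∈ 𝓜_τ with D(u) ≠ 0, and let λ_1, λ_2 ∈ ℝ satisfy both identities (1−2λ_2)‖∇u‖_2^2 + (1−2sλ_2)[u]^2 = λ_1‖u‖_2^2 + μ(1−λ_2pγ_p)‖u‖_p^p + (1−2·2*_α·λ_2)A(u) and ((N−2)/2)(1−2λ_2)‖∇u‖_2^2 + ((N−2s)/2)(1−2sλ_2)[u]^2 = (Nλ_1/2)‖u‖_2^2 + (Nμ/p)(1−λ_2pγ_p)‖u‖_p^p + ((N+α)/(2·2*_α))(1−2·2*_α·λ_2)A(u). Then λ_2 = 0. -/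

import Mathlib

open MeasureTheory Real Set Filter
open scoped RealInnerProductSpace Topology

noncomputable section

abbrev Euc (N : ℕ) := EuclideanSpace ℝ (Fin N)

/-- Squared `L²` norm of the gradient, `‖∇u‖₂²`. -/
noncomputable def gradSq (N : ℕ) (u : Euc N → ℝ) : ℝ :=
  ∫ x : Euc N, ‖gradient u x‖ ^ 2

/-- The squared Gagliardo seminorm `[u]²` of order `s`. -/
noncomputable def gagSq (N : ℕ) (s : ℝ) (u : Euc N → ℝ) : ℝ :=
  ∫ x : Euc N, ∫ y : Euc N, |u x - u y| ^ 2 / ‖x - y‖ ^ ((N : ℝ) + 2 * s)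

/-- `‖u‖_q^q`. -/
noncomputable def pPow (N : ℕ) (q : ℝ) (u : Euc N → ℝ) : ℝ :=
  ∫ x : Euc N, |u x| ^ q

/-- Squared `L²` norm. -/
noncomputable def l2Sq (N : ℕ) (u : Euc N → ℝ) : ℝ := ∫ x : Euc N, (u x) ^ 2

/-- The `L²` norm. -/
noncomputable def l2N (N : ℕ) (u : Euc N → ℝ) : ℝ := Real.sqrt (l2Sq N u)

/-- The Choquard (Riesz-potential) double integral `A(u)` with exponent `q`. -/
noncomputable def choq (N : ℕ) (α q : ℝ) (u : Euc N → ℝ) : ℝ :=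
  ∫ x : Euc N, ∫ y : Euc N, |u x| ^ q * |u y| ^ q / ‖x - y‖ ^ ((N : ℝ) - α)

/-- The Hardy–Littlewood–Sobolev critical exponent `2*_α = (N+α)/(N−2)`. -/
noncomputable def qα (N : ℕ) (α : ℝ) : ℝ := ((N : ℝ) + α) / ((N : ℝ) - 2)

/-- `γ_p = N(p−2)/(2p)`. -/
noncomputable def γp (N : ℕ) (p : ℝ) : ℝ := (N : ℝ) * (p - 2) / (2 * p)

/-- Membership in `H¹(ℝ^N)`. -/
def InH1 (N : ℕ) (u : Euc N → ℝ) : Prop :=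
  MemLp u 2 (volume : Measure (Euc N)) ∧
    MemLp (fun x => ‖gradient u x‖) 2 (volume : Measure (Euc N))

/-- Membership in `D^{1,2}(ℝ^N)`. -/
def InD12 (N : ℕ) (u : Euc N → ℝ) : Prop :=
  MemLp u (ENNReal.ofReal (2 * (N : ℝ) / ((N : ℝ) - 2))) (volume : Measure (Euc N)) ∧
    MemLp (fun x => ‖gradient u x‖) 2 (volume : Measure (Euc N))

/-- `T(u)² = ‖∇u‖₂² + [u]²`. -/
noncomputable def TSq (N : ℕ) (s : ℝ) (u : Euc N → ℝ) : ℝ := gradSq N u + gagSq N s u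

/-- `T(u)`. -/
noncomputable def Tn (N : ℕ) (s : ℝ) (u : Euc N → ℝ) : ℝ := Real.sqrt (TSq N s u)

/-- The energy functional `E`. -/
noncomputable def En (N : ℕ) (s α p μ : ℝ) (u : Euc N → ℝ) : ℝ :=
  gradSq N u / 2 + gagSq N s u / 2 - μ / p * pPow N p u
    - choq N α (qα N α) u / (2 * qα N α)

/-- The Pohozaev functional `M`. -/
noncomputable def Poh (N : ℕ) (s α p μ : ℝ) (u : Euc N → ℝ) : ℝ :=
  gradSq N u + s * gagSq N s u - μ * γp N p * pPow N p u - choq N α (qα N α) u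

/-- `D(u) = 2‖∇u‖₂² + 2s²[u]² − μpγ_p²‖u‖_p^p − 2·2*_α A(u)`. -/
noncomputable def Dn (N : ℕ) (s α p μ : ℝ) (u : Euc N → ℝ) : ℝ :=
  2 * gradSq N u + 2 * s ^ 2 * gagSq N s u - μ * p * (γp N p) ^ 2 * pPow N p u
    - 2 * qα N α * choq N α (qα N α) u

/-- The sphere `S(τ)` in `H¹`. -/
def Sph (N : ℕ) (τ : ℝ) : Set (Euc N → ℝ) := {u | InH1 N u ∧ l2N N u = τ}

/-- The Pohozaev manifold `𝓜_τ`. -/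
def Mman (N : ℕ) (s α p μ τ : ℝ) : Set (Euc N → ℝ) :=
  {u | u ∈ Sph N τ ∧ Poh N s α p μ u = 0}

/-- `𝓜_τ⁺`. -/
def Mplus (N : ℕ) (s α p μ τ : ℝ) : Set (Euc N → ℝ) :=
  {u ∈ Mman N s α p μ τ | 0 < Dn N s α p μ u}

/-- `𝓜_τ⁻`. -/
def Mminus (N : ℕ) (s α p μ τ : ℝ) : Set (Euc N → ℝ) :=
  {u ∈ Mman N s α p μ τ | Dn N s α p μ u < 0}

/-- `𝓜_τ⁰`. -/
def Mzero (N : ℕ) (s α p μ τ : ℝ) : Set (Euc N → ℝ) :=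
  {u ∈ Mman N s α p μ τ | Dn N s α p μ u = 0}

/-- `Sα` is the best constant in `‖∇u‖₂² ≥ Sα A(u)^{1/2*_α}` on `D^{1,2}`. -/
def IsSalpha (N : ℕ) (α Sα : ℝ) : Prop :=
  Sα = sInf {r : ℝ | ∃ u : Euc N → ℝ, InD12 N u ∧ u ≠ 0 ∧
    r = gradSq N u / (choq N α (qα N α) u) ^ (1 / qα N α)}

/-- `CNp` is the optimal constant in the Gagliardo–Nirenberg inequality
`‖u‖_p^p ≤ C ‖∇u‖₂^{pγ_p} ‖u‖₂^{p(1−γ_p)}` on `H¹`. -/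
def IsGN (N : ℕ) (p CNp : ℝ) : Prop :=
  IsLeast {C : ℝ | ∀ u : Euc N → ℝ, InH1 N u →
    pPow N p u ≤ C * gradSq N u ^ (p * γp N p / 2) * l2N N u ^ (p * (1 - γp N p))} CNp

/-- The threshold `τ₀`. -/
noncomputable def tau0 (N : ℕ) (α p μ Sα CNp : ℝ) : ℝ :=
  (p * (qα N α - 1) / (μ * CNp * (2 * qα N α - p * γp N p)) *
      ((2 - p * γp N p) * qα N α * Sα ^ qα N α / (2 * qα N α - p * γp N p)) ^
        ((2 - p * γp N p) / (2 * (qα N α - 1)))) ^ (1 / (p * (1 - γp N p)))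

/-- The threshold `τ₁`. -/
noncomputable def tau1 (N : ℕ) (α p μ Sα CNp : ℝ) : ℝ :=
  (2 * (qα N α - 1) / (γp N p ^ (p * γp N p / 2) * μ * CNp * (2 * qα N α - p * γp N p)) *
      (p * Sα ^ (qα N α / (qα N α - 1)) / (2 - p * γp N p)) ^ ((2 - p * γp N p) / 2)) ^
    (1 / (p * (1 - γp N p)))

/-- The comparison function `h`. -/
noncomputable def hfun (N : ℕ) (α p μ τ Sα CNp : ℝ) (t : ℝ) : ℝ :=
  t ^ (2 : ℝ) / 2 - μ * CNp / p * τ ^ (p * (1 - γp N p)) * t ^ (p * γp N p)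
    - t ^ (2 * qα N α) / (2 * qα N α * Sα ^ qα N α)

/-- The mass-preserving dilation `(t ⋆ u)(x) = e^{Nt/2} u(e^t x)`. -/
noncomputable def starD (N : ℕ) (t : ℝ) (u : Euc N → ℝ) : Euc N → ℝ :=
  fun x => Real.exp ((N : ℝ) * t / 2) * u (Real.exp t • x)

/-- The fibering map `ψ_u(t) = E(t ⋆ u)`. -/
noncomputable def ψf (N : ℕ) (s α p μ : ℝ) (u : Euc N → ℝ) (t : ℝ) : ℝ :=
  En N s α p μ (starD N t u)

/-- The dilation `(c ⊛ u)(x) = c^{N/2} u(cx)`. -/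
noncomputable def dil (N : ℕ) (c : ℝ) (u : Euc N → ℝ) : Euc N → ℝ :=
  fun x => c ^ ((N : ℝ) / 2) * u (c • x)

/-- Radial symmetry. -/
def Radial (N : ℕ) (u : Euc N → ℝ) : Prop := ∀ x y : Euc N, ‖x‖ = ‖y‖ → u x = u y

/-- `u` is a weak solution of the equation with Lagrange multiplier `lam`. -/
def WeakSol (N : ℕ) (s α p μ lam : ℝ) (u : Euc N → ℝ) : Prop :=
  ∀ v : Euc N → ℝ, InH1 N v →
    (∫ x : Euc N, ⟪gradient u x, gradient v x⟫) +
      (∫ x : Euc N, ∫ y : Euc N, (u x - u y) * (v x - v y) / ‖x - y‖ ^ ((N : ℝ) + 2 * s)) =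
    lam * (∫ x : Euc N, u x * v x) + μ * (∫ x : Euc N, |u x| ^ (p - 2) * u x * v x) +
      (∫ x : Euc N, ∫ y : Euc N,
        |u y| ^ qα N α * |u x| ^ (qα N α - 2) * u x * v x / ‖x - y‖ ^ ((N : ℝ) - α))

/-- Lemma 2.4, key step: if `u ∈ 𝓜_τ` with `D(u) ≠ 0` and `λ₁, λ₂` satisfy
the two identities coming from the Lagrange-multiplier equation and its Pohozaev identity,
then `λ₂ = 0`. -/
theorem statement7 (N : ℕ) (hN : 3 ≤ N) (s α p μ τ : ℝ)
    (hs : 0 < s ∧ s < 1) (hα : 0 < α ∧ α < N)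
    (hp : 2 < p ∧ p < 2 + 4 * s / N) (hμ : 0 < μ) (hτ : 0 < τ)
    (u : Euc N → ℝ) (hu : u ∈ Mman N s α p μ τ) (hD : Dn N s α p μ u ≠ 0)
    (lam₁ lam₂ : ℝ)
    (hid1 : (1 - 2 * lam₂) * gradSq N u + (1 - 2 * s * lam₂) * gagSq N s u
      = lam₁ * l2Sq N u + μ * (1 - lam₂ * p * γp N p) * pPow N p u
        + (1 - 2 * qα N α * lam₂) * choq N α (qα N α) u)
    (hid2 : ((N : ℝ) - 2) / 2 * ((1 - 2 * lam₂) * gradSq N u)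
        + ((N : ℝ) - 2 * s) / 2 * ((1 - 2 * s * lam₂) * gagSq N s u)
      = (N : ℝ) * lam₁ / 2 * l2Sq N u
        + (N : ℝ) * μ / p * ((1 - lam₂ * p * γp N p) * pPow N p u)
        + ((N : ℝ) + α) / (2 * qα N α) * ((1 - 2 * qα N α * lam₂) * choq N α (qα N α) u)) :
    lam₂ = 0 := by
  have hN2 : ((N : ℝ) - 2) ≠ 0 := by
    have : (3 : ℝ) ≤ (N : ℝ) := by exact_mod_cast hN
    nlinarith
  have hNA : ((N : ℝ) + α) ≠ 0 := by
    have : (3 : ℝ) ≤ (N : ℝ) := by exact_mod_cast hN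
    nlinarith [hα.1]
  have hp0 : p ≠ 0 := by linarith [hp.1]
  have h1 : ((N : ℝ) + α) / (2 * qα N α) = ((N : ℝ) - 2) / 2 := by
    unfold qα; field_simp
  have hγ' : (N : ℝ) / 2 - (N : ℝ) / p = γp N p := by
    unfold γp; field_simp
  rw [h1] at hid2
  have hM : Poh N s α p μ u = 0 := hu.2
  unfold Poh at hM
  have key : lam₂ * Dn N s α p μ u = 0 := by
    unfold Dn
    linear_combination hM - (N : ℝ) / 2 * hid1 + hid2
      - (μ * (1 - lam₂ * p * γp N p) * pPow N p u) * hγ'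
  rcases mul_eq_zero.mp key with h | h
  · exact h
  · exact absurd h hD
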